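/- Discrete energy law for the semi-discrete staggered-grid CHNS scheme: solutions of the semi-discrete scheme (momentum equations with skew-symmetric discrete convection, discrete incompressibility d_x u + d_y v = 0, Cahn-Hilliard equation with discrete transport, and μ = −γεΔ_hφ + (γ/ε)f′(φ)) satisfy (d/dt)E_h + (η, (d_x u)² + (d_y v)²)₂ + [M(A_xφ), (D_xμ)²]_{ew} + [M(A_yφ), (D_yμ)²]_{ns} = 0, where E_h = (1/2)‖u‖₂² + (γε/2)‖∇_hφ‖₂² + (γ/ε)(f(φ), 1)₂, assuming the semi-discrete inner-product identities: [u·D_x(a_x u)+A_x(d_x(uu)), u]_{ew} = 0, the analogous y-direction and cross identities, [D_x p,u]_{ew}+[D_y p,v]_{ns} = −(p, d_x u + d_y v)₂, and [A_xφ D_xμ, u]_{ew}+[A_yφ D_yμ, v]_{ns} = −(μ, d_x(A_xφ u)+d_y(A_yφ v))₂. -/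

import Mathlib

open Finset

noncomputable section

/-! Staggered-grid finite-difference operators on a uniform `N_x × N_y` mesh with spacings
`h_x, h_y`.  Grid functions are modelled as `ℤ → ℤ → ℝ`.  For cell-centered functions the
index `(i,j)` denotes the cell center `(x_i, y_j)`; for east–west edge functions the first
index `i` denotes the edge abscissa `x_{i+1/2}`; for north–south edge functions the second
index `j` denotes the edge ordinate `y_{j+1/2}`; vertex functions use both conventions. -/

/-- Edge-to-center average in `x`: `(a_x w)_{i,j} = (w_{i+1/2,j} + w_{i-1/2,j})/2`. -/
def axOp (w : ℤ → ℤ → ℝ) : ℤ → ℤ → ℝ := fun i j => (w i j + w (i - 1) j) / 2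

/-- Edge-to-center difference in `x`: `(d_x w)_{i,j} = (w_{i+1/2,j} − w_{i-1/2,j})/h_x`. -/
def dxOp (hx : ℝ) (w : ℤ → ℤ → ℝ) : ℤ → ℤ → ℝ := fun i j => (w i j - w (i - 1) j) / hx

/-- Center-to-edge average in `x`: `(A_x φ)_{i+1/2,j} = (φ_{i+1,j} + φ_{i,j})/2`. -/
def AxOp (φ : ℤ → ℤ → ℝ) : ℤ → ℤ → ℝ := fun i j => (φ (i + 1) j + φ i j) / 2

/-- Center-to-edge difference in `x`: `(D_x φ)_{i+1/2,j} = (φ_{i+1,j} − φ_{i,j})/h_x`. -/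
def DxOp (hx : ℝ) (φ : ℤ → ℤ → ℝ) : ℤ → ℤ → ℝ := fun i j => (φ (i + 1) j - φ i j) / hx

/-- Edge-to-center average in `y`. -/
def ayOp (w : ℤ → ℤ → ℝ) : ℤ → ℤ → ℝ := fun i j => (w i j + w i (j - 1)) / 2

/-- Edge-to-center difference in `y`. -/
def dyOp (hy : ℝ) (w : ℤ → ℤ → ℝ) : ℤ → ℤ → ℝ := fun i j => (w i j - w i (j - 1)) / hy

/-- Center-to-edge average in `y`. -/
def AyOp (φ : ℤ → ℤ → ℝ) : ℤ → ℤ → ℝ := fun i j => (φ i (j + 1) + φ i j) / 2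

/-- Center-to-edge difference in `y`. -/
def DyOp (hy : ℝ) (φ : ℤ → ℤ → ℝ) : ℤ → ℤ → ℝ := fun i j => (φ i (j + 1) - φ i j) / hy

/-- The discrete cell-centered inner product
`(φ,ψ)₂ = h_x h_y ∑_{i=1}^{N_x} ∑_{j=1}^{N_y} φ_{i,j} ψ_{i,j}`. -/
def ip2 (Nx Ny : ℕ) (hx hy : ℝ) (f g : ℤ → ℤ → ℝ) : ℝ :=
  hx * hy * ∑ i ∈ Icc (1 : ℤ) (Nx : ℤ), ∑ j ∈ Icc (1 : ℤ) (Ny : ℤ), f i j * g i j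

/-- The east–west edge inner product `[u,r]_{ew} = (a_x(u r), 1)₂`. -/
def ipew (Nx Ny : ℕ) (hx hy : ℝ) (f g : ℤ → ℤ → ℝ) : ℝ :=
  ip2 Nx Ny hx hy (axOp (f * g)) 1

/-- The north–south edge inner product `[v,w]_{ns} = (a_y(v w), 1)₂`. -/
def ipns (Nx Ny : ℕ) (hx hy : ℝ) (f g : ℤ → ℤ → ℝ) : ℝ :=
  ip2 Nx Ny hx hy (ayOp (f * g)) 1

/-- The vertex inner product `⟨f,g⟩_{vc} = (a_x(a_y(f g)), 1)₂`. -/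
def ipvc (Nx Ny : ℕ) (hx hy : ℝ) (f g : ℤ → ℤ → ℝ) : ℝ :=
  ip2 Nx Ny hx hy (axOp (ayOp (f * g))) 1

/-! Pair the momentum equations with `u, v` over the interior edges, the Cahn–Hilliard equation
with `μ`, and the chemical-potential equation with `φ_t`. One-dimensional summation by parts,
with boundary terms killed by the no-slip conditions on `u, v` and by the Neumann ghost values
(which make `D_x φ`, `D_x μ` vanish on the boundary edges), turns the viscous term into
`-η ‖d_x u‖² - η ‖d_y v‖²`, the mobility term into `-[M(A_x φ), (D_x μ)²] - [M(A_y φ), (D_y μ)²]`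
and `(μ, φ_t)₂` into the time derivative of the free energy. The assumed identities make the
convection vanish, reduce the pressure work to `(p, d_x u + d_y v)₂ = 0`, and make the surface
tension in the kinetic balance cancel the transport term of the Cahn–Hilliard balance. -/

theorem sum_Icc_one_eq_of_top_eq_zero {α : Type*} [AddCommMonoid α] {f : ℤ → α} {N : ℤ}
    (hN : f N = 0) : ∑ i ∈ Icc 1 N, f i = ∑ i ∈ Icc 1 (N - 1), f i := by
  rcases lt_or_ge N 1 with hN1 | hN1
  · rw [Icc_eq_empty (by omega), Icc_eq_empty (by omega)]
  · rw [← insert_Icc_sub_one_right_eq_Icc hN1, sum_insert (by simp), hN, zero_add]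

theorem sum_Icc_one_comp_sub_one {α : Type*} [AddCommMonoid α] {f : ℤ → α} {N : ℤ}
    (h0 : f 0 = 0) : ∑ i ∈ Icc 1 N, f (i - 1) = ∑ i ∈ Icc 1 (N - 1), f i := by
  have hshift : ∑ i ∈ Icc 1 N, f (i - 1) = ∑ i ∈ Icc 0 (N - 1), f i := by
    rw [show Icc 1 N = (Icc 0 (N - 1)).map (addRightEmbedding 1) by simp, sum_map]
    simp
  rcases lt_or_ge N 1 with hN1 | hN1
  · rw [Icc_eq_empty (by omega), Icc_eq_empty (by omega), sum_empty, sum_empty]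
  · rw [hshift, ← insert_Icc_add_one_left_eq_Icc (by omega), sum_insert (by simp), h0, zero_add,
      zero_add]

theorem sum_Icc_one_avg_of_boundary {g : ℤ → ℝ} {N : ℤ} (h0 : g 0 = 0) (hN : g N = 0) :
    ∑ i ∈ Icc 1 N, (g i + g (i - 1)) / 2 = ∑ i ∈ Icc 1 (N - 1), g i := by
  rw [← sum_div, sum_add_distrib, sum_Icc_one_eq_of_top_eq_zero hN, sum_Icc_one_comp_sub_one h0]
  ring

theorem sum_Icc_one_sub_mul_eq_neg {G c : ℤ → ℝ} {N : ℤ} (h0 : G 0 = 0) (hN : G N = 0) :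
    ∑ i ∈ Icc 1 N, (G i - G (i - 1)) * c i
      = -∑ i ∈ Icc 1 (N - 1), (c (i + 1) - c i) * G i := by
  have hshift : ∑ i ∈ Icc 1 N, G (i - 1) * c i = ∑ i ∈ Icc 1 (N - 1), G i * c (i + 1) := by
    simpa using sum_Icc_one_comp_sub_one (f := fun i => G i * c (i + 1)) (N := N) (by simp [h0])
  have htop : ∑ i ∈ Icc 1 N, G i * c i = ∑ i ∈ Icc 1 (N - 1), G i * c i :=
    sum_Icc_one_eq_of_top_eq_zero (f := fun i => G i * c i) (by simp [hN])
  simp only [sub_mul, sum_sub_distrib, hshift, htop, mul_comm (c _)]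
  ring

section GridInnerProducts

variable {Nx Ny : ℕ} {hx hy : ℝ}

theorem ip2_comm (f g : ℤ → ℤ → ℝ) : ip2 Nx Ny hx hy f g = ip2 Nx Ny hx hy g f := by
  simp only [ip2, mul_comm (f _ _)]

theorem ip2_add_left (f f' g : ℤ → ℤ → ℝ) :
    ip2 Nx Ny hx hy (f + f') g = ip2 Nx Ny hx hy f g + ip2 Nx Ny hx hy f' g := by
  simp only [ip2, Pi.add_apply, add_mul, sum_add_distrib, mul_add]

theorem ip2_smul_left (c : ℝ) (f g : ℤ → ℤ → ℝ) :
    ip2 Nx Ny hx hy (c • f) g = c * ip2 Nx Ny hx hy f g := by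
  simp only [ip2, Pi.smul_apply, smul_eq_mul, mul_assoc, ← mul_sum]
  ring

theorem ip2_congr_left {f f' g : ℤ → ℤ → ℝ}
    (h : ∀ i ∈ Icc (1 : ℤ) Nx, ∀ j ∈ Icc (1 : ℤ) Ny, f i j = f' i j) :
    ip2 Nx Ny hx hy f g = ip2 Nx Ny hx hy f' g := by
  unfold ip2
  congr 1
  exact sum_congr rfl fun i hi => sum_congr rfl fun j hj => by rw [h i hi j hj]

theorem ip2_eq_zero_of_right {f g : ℤ → ℤ → ℝ}
    (h : ∀ i ∈ Icc (1 : ℤ) Nx, ∀ j ∈ Icc (1 : ℤ) Ny, g i j = 0) :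
    ip2 Nx Ny hx hy f g = 0 := by
  rw [ip2_comm, ip2_congr_left (f' := 0) h]
  simp [ip2]

theorem ip2_const_left_mul_add_mul (c : ℝ) (a b a' b' : ℤ → ℤ → ℝ) :
    ip2 Nx Ny hx hy (fun _ _ => c) (a * b + a' * b')
      = c * (ip2 Nx Ny hx hy a b + ip2 Nx Ny hx hy a' b') := by
  simp only [ip2, Pi.add_apply, Pi.mul_apply, mul_add, sum_add_distrib, ← mul_sum]
  ring

theorem ipew_eq_sum_interior {f g : ℤ → ℤ → ℝ} (h0 : ∀ j, f 0 j * g 0 j = 0)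
    (hN : ∀ j, f Nx j * g Nx j = 0) :
    ipew Nx Ny hx hy f g
      = hx * hy * ∑ i ∈ Icc (1 : ℤ) (Nx - 1), ∑ j ∈ Icc (1 : ℤ) Ny, f i j * g i j := by
  simp only [ipew, ip2, axOp, Pi.mul_apply, Pi.one_apply, mul_one]
  rw [sum_comm, sum_comm (s := Icc (1 : ℤ) (Nx - 1))]
  congr 1
  exact sum_congr rfl fun j _ =>
    sum_Icc_one_avg_of_boundary (g := fun i => f i j * g i j) (h0 j) (hN j)

theorem ipew_add_left (f f' g : ℤ → ℤ → ℝ) :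
    ipew Nx Ny hx hy (f + f') g = ipew Nx Ny hx hy f g + ipew Nx Ny hx hy f' g := by
  simp only [ipew, ip2, axOp, Pi.add_apply, Pi.mul_apply, Pi.one_apply, mul_one, ← sum_add_distrib,
    ← mul_add]
  congr 1
  exact sum_congr rfl fun i _ => sum_congr rfl fun j _ => by ring

theorem ipew_sub_left (f f' g : ℤ → ℤ → ℝ) :
    ipew Nx Ny hx hy (f - f') g = ipew Nx Ny hx hy f g - ipew Nx Ny hx hy f' g := by
  simp only [ipew, ip2, axOp, Pi.sub_apply, Pi.mul_apply, Pi.one_apply, mul_one, ← sum_sub_distrib,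
    ← mul_sub]
  congr 1
  exact sum_congr rfl fun i _ => sum_congr rfl fun j _ => by ring

theorem ipew_smul_left (c : ℝ) (f g : ℤ → ℤ → ℝ) :
    ipew Nx Ny hx hy (c • f) g = c * ipew Nx Ny hx hy f g := by
  simp only [ipew, ip2, axOp, Pi.smul_apply, smul_eq_mul, Pi.mul_apply, Pi.one_apply, mul_one,
    mul_sum]
  exact sum_congr rfl fun i _ => sum_congr rfl fun j _ => by ring

theorem ipew_congr_left {f f' w : ℤ → ℤ → ℝ} (h0 : ∀ j, w 0 j = 0) (hN : ∀ j, w Nx j = 0)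
    (h : ∀ i ∈ Icc (1 : ℤ) (Nx - 1), ∀ j ∈ Icc (1 : ℤ) Ny, f i j = f' i j) :
    ipew Nx Ny hx hy f w = ipew Nx Ny hx hy f' w := by
  rw [ipew_eq_sum_interior (by simp [h0]) (by simp [hN]),
    ipew_eq_sum_interior (by simp [h0]) (by simp [hN])]
  congr 1
  exact sum_congr rfl fun i hi => sum_congr rfl fun j hj => by rw [h i hi j hj]

theorem ip2_dxOp_eq_neg_ipew {w : ℤ → ℤ → ℝ} (c : ℤ → ℤ → ℝ) (h0 : ∀ j, w 0 j = 0)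
    (hN : ∀ j, w Nx j = 0) :
    ip2 Nx Ny hx hy (dxOp hx w) c = -ipew Nx Ny hx hy (DxOp hx c) w := by
  rw [ipew_eq_sum_interior (by simp [h0]) (by simp [hN]), ip2, sum_comm,
    sum_comm (s := Icc (1 : ℤ) (Nx - 1)), ← mul_neg, ← sum_neg_distrib]
  congr 1
  refine sum_congr rfl fun j _ => ?_
  have := sum_Icc_one_sub_mul_eq_neg (G := fun i => w i j) (c := fun i => c i j) (h0 j) (hN j)
  simp only [dxOp, DxOp, div_mul_eq_mul_div, ← sum_div, this, neg_div]

end GridInnerProducts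

section TimeDerivatives

variable {Nx Ny : ℕ} {hx hy : ℝ} {t : ℝ}

theorem hasDerivAt_ipew_self {w : ℝ → ℤ → ℤ → ℝ} {w' : ℤ → ℤ → ℝ}
    (hw : ∀ i j, HasDerivAt (fun s => w s i j) (w' i j) t) :
    HasDerivAt (fun s => ipew Nx Ny hx hy (w s) (w s)) (2 * ipew Nx Ny hx hy w' (w t)) t := by
  have hsum := (HasDerivAt.fun_sum (u := Icc (1 : ℤ) Nx) fun i _ =>
    HasDerivAt.fun_sum (u := Icc (1 : ℤ) Ny) fun j _ =>
      (((hw i j).fun_mul (hw i j)).fun_add ((hw (i - 1) j).fun_mul (hw (i - 1) j))).div_const 2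
    ).const_mul (hx * hy)
  simp only [ipew, ip2, axOp, Pi.mul_apply, Pi.one_apply, mul_one] at hsum ⊢
  refine hsum.congr_deriv ?_
  simp only [mul_sum]
  exact sum_congr rfl fun i _ => sum_congr rfl fun j _ => by ring

theorem hasDerivAt_ip2_comp_one {F F' : ℝ → ℝ} {φ : ℝ → ℤ → ℤ → ℝ} {φ' : ℤ → ℤ → ℝ}
    (hF : ∀ x, HasDerivAt F (F' x) x) (hφ : ∀ i j, HasDerivAt (fun s => φ s i j) (φ' i j) t) :
    HasDerivAt (fun s => ip2 Nx Ny hx hy (fun i j => F (φ s i j)) 1)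
      (ip2 Nx Ny hx hy (fun i j => F' (φ t i j)) φ') t := by
  simpa only [ip2, Pi.one_apply, mul_one, Function.comp_def] using
    (HasDerivAt.fun_sum (u := Icc (1 : ℤ) Nx) fun i _ =>
      HasDerivAt.fun_sum (u := Icc (1 : ℤ) Ny) fun j _ =>
        (hF (φ t i j)).comp t (hφ i j)).const_mul (hx * hy)

end TimeDerivatives

section Transpose

/-! Transposing the grid turns the `y`-operators into the `x`-operators definitionally
(e.g. `swap (DyOp hy c) = DxOp hy (swap c)`), so each `y`-statement is the `x`-statement for
the transposed grid. -/

open Function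

variable {Nx Ny : ℕ} {hx hy : ℝ}

theorem ip2_eq_ip2_swap (f g : ℤ → ℤ → ℝ) :
    ip2 Nx Ny hx hy f g = ip2 Ny Nx hy hx (swap f) (swap g) := by
  simp only [ip2, swap]
  rw [sum_comm, mul_comm hx hy]

theorem ipns_eq_ipew_swap (f g : ℤ → ℤ → ℝ) :
    ipns Nx Ny hx hy f g = ipew Ny Nx hy hx (swap f) (swap g) := by
  rw [ipns, ip2_eq_ip2_swap]
  rfl

theorem ip2_dyOp_eq_neg_ipns {w : ℤ → ℤ → ℝ} (c : ℤ → ℤ → ℝ) (h0 : ∀ i, w i 0 = 0)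
    (hN : ∀ i, w i Ny = 0) :
    ip2 Nx Ny hx hy (dyOp hy w) c = -ipns Nx Ny hx hy (DyOp hy c) w := by
  rw [ip2_eq_ip2_swap, ipns_eq_ipew_swap]
  exact ip2_dxOp_eq_neg_ipew (swap c) h0 hN

theorem hasDerivAt_ipns_self {t : ℝ} {w : ℝ → ℤ → ℤ → ℝ} {w' : ℤ → ℤ → ℝ}
    (hw : ∀ i j, HasDerivAt (fun s => w s i j) (w' i j) t) :
    HasDerivAt (fun s => ipns Nx Ny hx hy (w s) (w s)) (2 * ipns Nx Ny hx hy w' (w t)) t := by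
  simp only [ipns_eq_ipew_swap]
  exact hasDerivAt_ipew_self (w := fun s => swap (w s)) fun i j => hw j i

end Transpose

section Scheme

open Function

variable {Nx Ny : ℕ} {hx hy : ℝ}

theorem ipew_eq_of_momentum {η : ℝ} {u ut p F K₁ K₂ K₃ K₄ : ℤ → ℤ → ℝ} (h0 : ∀ j, u 0 j = 0)
    (hN : ∀ j, u Nx j = 0)
    (hmom : ∀ i ∈ Icc (1 : ℤ) (Nx - 1), ∀ j ∈ Icc (1 : ℤ) Ny,
      ut i j + (1 / 2) * ((K₁ + K₂ + K₃ + K₄) i j)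
        = -DxOp hx p i j + η * DxOp hx (dxOp hx u) i j - F i j)
    (hskew₁ : ipew Nx Ny hx hy (K₁ + K₂) u = 0) (hskew₂ : ipew Nx Ny hx hy (K₃ + K₄) u = 0) :
    ipew Nx Ny hx hy ut u
      = -ipew Nx Ny hx hy (DxOp hx p) u - η * ip2 Nx Ny hx hy (dxOp hx u) (dxOp hx u)
        - ipew Nx Ny hx hy F u := by
  have hut : ipew Nx Ny hx hy ut u = ipew Nx Ny hx hy
      ((-(1 / 2) : ℝ) • (K₁ + K₂ + (K₃ + K₄)) - DxOp hx p + η • DxOp hx (dxOp hx u) - F) u :=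
    ipew_congr_left h0 hN fun i hi j hj => by
      have := hmom i hi j hj
      simp only [Pi.add_apply, Pi.sub_apply, Pi.smul_apply, smul_eq_mul] at this ⊢
      linarith
  rw [hut, ipew_sub_left, ipew_add_left, ipew_sub_left, ipew_smul_left, ipew_add_left, hskew₁,
    hskew₂, ipew_smul_left, ip2_dxOp_eq_neg_ipew _ h0 hN]
  ring

theorem ipns_eq_of_momentum {η : ℝ} {v vt p F K₁ K₂ K₃ K₄ : ℤ → ℤ → ℝ} (h0 : ∀ i, v i 0 = 0)
    (hN : ∀ i, v i Ny = 0)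
    (hmom : ∀ i ∈ Icc (1 : ℤ) Nx, ∀ j ∈ Icc (1 : ℤ) (Ny - 1),
      vt i j + (1 / 2) * ((K₁ + K₂ + K₃ + K₄) i j)
        = -DyOp hy p i j + η * DyOp hy (dyOp hy v) i j - F i j)
    (hskew₁ : ipns Nx Ny hx hy (K₁ + K₂) v = 0) (hskew₂ : ipns Nx Ny hx hy (K₃ + K₄) v = 0) :
    ipns Nx Ny hx hy vt v
      = -ipns Nx Ny hx hy (DyOp hy p) v - η * ip2 Nx Ny hx hy (dyOp hy v) (dyOp hy v)
        - ipns Nx Ny hx hy F v := by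
  rw [ipns_eq_ipew_swap] at hskew₁ hskew₂
  simp only [ipns_eq_ipew_swap, ip2_eq_ip2_swap (Nx := Nx)]
  exact ipew_eq_of_momentum (u := swap v) (ut := swap vt) (p := swap p) (F := swap F)
    (K₁ := swap K₁) (K₂ := swap K₂) (K₃ := swap K₃) (K₄ := swap K₄) h0 hN
    (fun i hi j hj => hmom j hj i hi) hskew₁ hskew₂

theorem ip2_eq_of_chemicalPotential {γ ε : ℝ} {fd : ℝ → ℝ} {φ μ : ℤ → ℤ → ℝ} (ψ : ℤ → ℤ → ℝ)
    (hW : ∀ j, φ 0 j = φ 1 j) (hE : ∀ j, φ (Nx + 1) j = φ Nx j)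
    (hS : ∀ i, φ i 0 = φ i 1) (hN : ∀ i, φ i (Ny + 1) = φ i Ny)
    (hμ : ∀ i ∈ Icc (1 : ℤ) Nx, ∀ j ∈ Icc (1 : ℤ) Ny,
      μ i j = -(γ * ε) * (dxOp hx (DxOp hx φ) i j + dyOp hy (DyOp hy φ) i j)
        + (γ / ε) * fd (φ i j)) :
    ip2 Nx Ny hx hy μ ψ
      = γ * ε * (ipew Nx Ny hx hy (DxOp hx ψ) (DxOp hx φ)
          + ipns Nx Ny hx hy (DyOp hy ψ) (DyOp hy φ))
        + (γ / ε) * ip2 Nx Ny hx hy (fun i j => fd (φ i j)) ψ := by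
  rw [ip2_congr_left (f' := (-(γ * ε)) • (dxOp hx (DxOp hx φ) + dyOp hy (DyOp hy φ))
      + (γ / ε) • fun i j => fd (φ i j)) hμ,
    ip2_add_left, ip2_smul_left, ip2_smul_left, ip2_add_left,
    ip2_dxOp_eq_neg_ipew _ (fun j => by simp [DxOp, hW]) (fun j => by simp [DxOp, hE]),
    ip2_dyOp_eq_neg_ipns _ (fun i => by simp [DyOp, hS]) (fun i => by simp [DyOp, hN])]
  ring

theorem ip2_add_ip2_eq_of_cahnHilliard {μ φt Tx Ty Mx My : ℤ → ℤ → ℝ}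
    (hW : ∀ j, μ 0 j = μ 1 j) (hE : ∀ j, μ (Nx + 1) j = μ Nx j)
    (hS : ∀ i, μ i 0 = μ i 1) (hN : ∀ i, μ i (Ny + 1) = μ i Ny)
    (hCH : ∀ i ∈ Icc (1 : ℤ) Nx, ∀ j ∈ Icc (1 : ℤ) Ny,
      φt i j + Tx i j + Ty i j
        = dxOp hx (Mx * DxOp hx μ) i j + dyOp hy (My * DyOp hy μ) i j) :
    ip2 Nx Ny hx hy μ φt + ip2 Nx Ny hx hy μ (Tx + Ty)
      = -(ipew Nx Ny hx hy Mx (DxOp hx μ * DxOp hx μ)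
          + ipns Nx Ny hx hy My (DyOp hy μ * DyOp hy μ)) := by
  have hpair : ip2 Nx Ny hx hy (φt + (Tx + Ty)) μ
      = ip2 Nx Ny hx hy (dxOp hx (Mx * DxOp hx μ) + dyOp hy (My * DyOp hy μ)) μ :=
    ip2_congr_left fun i hi j hj => by
      simp only [Pi.add_apply, ← add_assoc]
      exact hCH i hi j hj
  rw [ip2_comm μ, ip2_comm μ, ← ip2_add_left, hpair, ip2_add_left,
    ip2_dxOp_eq_neg_ipew _ (fun j => by simp [DxOp, hW]) (fun j => by simp [DxOp, hE]),
    ip2_dyOp_eq_neg_ipns _ (fun i => by simp [DyOp, hS]) (fun i => by simp [DyOp, hN])]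
  simp only [ipew, ipns, mul_left_comm _ Mx, mul_left_comm _ My, neg_add]

end Scheme

def discreteEnergy (Nx Ny : ℕ) (hx hy γ ε : ℝ) (fW : ℝ → ℝ) (u v φ : ℤ → ℤ → ℝ) : ℝ :=
  (1 / 2) * (ipew Nx Ny hx hy u u + ipns Nx Ny hx hy v v)
    + (γ * ε / 2) * (ipew Nx Ny hx hy (DxOp hx φ) (DxOp hx φ)
        + ipns Nx Ny hx hy (DyOp hy φ) (DyOp hy φ))
    + (γ / ε) * ip2 Nx Ny hx hy (fun i j => fW (φ i j)) 1

theorem hasDerivAt_discreteEnergy {Nx Ny : ℕ} {hx hy γ ε t : ℝ} {fW fd : ℝ → ℝ}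
    {u v φ : ℝ → ℤ → ℤ → ℝ} {u' v' φ' : ℤ → ℤ → ℝ} (hf : ∀ x, HasDerivAt fW (fd x) x)
    (hu : ∀ i j, HasDerivAt (fun s => u s i j) (u' i j) t)
    (hv : ∀ i j, HasDerivAt (fun s => v s i j) (v' i j) t)
    (hφ : ∀ i j, HasDerivAt (fun s => φ s i j) (φ' i j) t) :
    HasDerivAt (fun s => discreteEnergy Nx Ny hx hy γ ε fW (u s) (v s) (φ s))
      (ipew Nx Ny hx hy u' (u t) + ipns Nx Ny hx hy v' (v t)
        + γ * ε * (ipew Nx Ny hx hy (DxOp hx φ') (DxOp hx (φ t))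
            + ipns Nx Ny hx hy (DyOp hy φ') (DyOp hy (φ t)))
        + (γ / ε) * ip2 Nx Ny hx hy (fun i j => fd (φ t i j)) φ') t := by
  have hDx : ∀ i j, HasDerivAt (fun s => DxOp hx (φ s) i j) (DxOp hx φ' i j) t :=
    fun i j => ((hφ (i + 1) j).sub (hφ i j)).div_const hx
  have hDy : ∀ i j, HasDerivAt (fun s => DyOp hy (φ s) i j) (DyOp hy φ' i j) t :=
    fun i j => ((hφ i (j + 1)).sub (hφ i j)).div_const hy
  refine ((((hasDerivAt_ipew_self hu).add (hasDerivAt_ipns_self hv)).const_mul (1 / 2)).add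
    (((hasDerivAt_ipew_self hDx).add (hasDerivAt_ipns_self hDy)).const_mul (γ * ε / 2))).add
    ((hasDerivAt_ip2_comp_one hf hφ).const_mul (γ / ε)) |>.congr_deriv ?_
  ring

theorem stmt16_general (Nx Ny : ℕ) (hx hy : ℝ) (γ ε η : ℝ)
    (u ut v vt φ φt μ p : ℝ → ℤ → ℤ → ℝ) (M : ℝ → ℝ)
    (fW fd : ℝ → ℝ) (hf : ∀ x, HasDerivAt fW (fd x) x)
    -- no-slip boundary conditions for the velocity
    (hu0 : ∀ t j, u t 0 j = 0) (huN : ∀ t j, u t (Nx : ℤ) j = 0)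
    (hv0 : ∀ t i, v t i 0 = 0) (hvN : ∀ t i, v t i (Ny : ℤ) = 0)
    -- discrete Neumann (ghost-cell) boundary conditions for φ and μ
    (hφW : ∀ t j, φ t 0 j = φ t 1 j) (hφE : ∀ t j, φ t ((Nx : ℤ) + 1) j = φ t (Nx : ℤ) j)
    (hφS : ∀ t i, φ t i 0 = φ t i 1) (hφN : ∀ t i, φ t i ((Ny : ℤ) + 1) = φ t i (Ny : ℤ))
    (hμW : ∀ t j, μ t 0 j = μ t 1 j) (hμE : ∀ t j, μ t ((Nx : ℤ) + 1) j = μ t (Nx : ℤ) j)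
    (hμS : ∀ t i, μ t i 0 = μ t i 1) (hμN : ∀ t i, μ t i ((Ny : ℤ) + 1) = μ t i (Ny : ℤ))
    -- time derivatives
    (hut : ∀ t i j, HasDerivAt (fun s => u s i j) (ut t i j) t)
    (hvt : ∀ t i j, HasDerivAt (fun s => v s i j) (vt t i j) t)
    (hφt : ∀ t i j, HasDerivAt (fun s => φ s i j) (φt t i j) t)
    -- the semi-discrete momentum equations with skew-symmetric discrete convection
    (hmom1 : ∀ t, ∀ i ∈ Icc (1 : ℤ) ((Nx : ℤ) - 1), ∀ j ∈ Icc (1 : ℤ) (Ny : ℤ),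
      ut t i j
          + (1 / 2) * ((u t * DxOp hx (axOp (u t)) + AxOp (dxOp hx (u t * u t))
              + ayOp (AxOp (v t) * DyOp hy (u t)) + dyOp hy (AyOp (u t) * AxOp (v t))) i j)
        = -DxOp hx (p t) i j + η * DxOp hx (dxOp hx (u t)) i j
            - AxOp (φ t) i j * DxOp hx (μ t) i j)
    (hmom2 : ∀ t, ∀ i ∈ Icc (1 : ℤ) (Nx : ℤ), ∀ j ∈ Icc (1 : ℤ) ((Ny : ℤ) - 1),
      vt t i j
          + (1 / 2) * ((axOp (AyOp (u t) * DxOp hx (v t)) + dxOp hx (AyOp (u t) * AxOp (v t))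
              + v t * DyOp hy (ayOp (v t)) + AyOp (dyOp hy (v t * v t))) i j)
        = -DyOp hy (p t) i j + η * DyOp hy (dyOp hy (v t)) i j
            - AyOp (φ t) i j * DyOp hy (μ t) i j)
    -- discrete incompressibility
    (hincomp : ∀ t, ∀ i ∈ Icc (1 : ℤ) (Nx : ℤ), ∀ j ∈ Icc (1 : ℤ) (Ny : ℤ),
      dxOp hx (u t) i j + dyOp hy (v t) i j = 0)
    -- the semi-discrete Cahn–Hilliard equation with discrete transport
    (hCH : ∀ t, ∀ i ∈ Icc (1 : ℤ) (Nx : ℤ), ∀ j ∈ Icc (1 : ℤ) (Ny : ℤ),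
      φt t i j + dxOp hx (AxOp (φ t) * u t) i j + dyOp hy (AyOp (φ t) * v t) i j
        = dxOp hx ((fun a b => M (AxOp (φ t) a b)) * DxOp hx (μ t)) i j
          + dyOp hy ((fun a b => M (AyOp (φ t) a b)) * DyOp hy (μ t)) i j)
    -- the discrete chemical potential μ = −γεΔ_hφ + (γ/ε)f′(φ)
    (hμdef : ∀ t, ∀ i ∈ Icc (1 : ℤ) (Nx : ℤ), ∀ j ∈ Icc (1 : ℤ) (Ny : ℤ),
      μ t i j
        = -(γ * ε) * (dxOp hx (DxOp hx (φ t)) i j + dyOp hy (DyOp hy (φ t)) i j)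
          + (γ / ε) * fd (φ t i j))
    -- assumed semi-discrete inner-product identities
    (hid1 : ∀ t, ipew Nx Ny hx hy
      (u t * DxOp hx (axOp (u t)) + AxOp (dxOp hx (u t * u t))) (u t) = 0)
    (hid2 : ∀ t, ipew Nx Ny hx hy
      (ayOp (AxOp (v t) * DyOp hy (u t)) + dyOp hy (AyOp (u t) * AxOp (v t))) (u t) = 0)
    (hid3 : ∀ t, ipns Nx Ny hx hy
      (axOp (AyOp (u t) * DxOp hx (v t)) + dxOp hx (AyOp (u t) * AxOp (v t))) (v t) = 0)
    (hid4 : ∀ t, ipns Nx Ny hx hy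
      (v t * DyOp hy (ayOp (v t)) + AyOp (dyOp hy (v t * v t))) (v t) = 0)
    (hid5 : ∀ t, ipew Nx Ny hx hy (DxOp hx (p t)) (u t)
        + ipns Nx Ny hx hy (DyOp hy (p t)) (v t)
      = -ip2 Nx Ny hx hy (p t) (dxOp hx (u t) + dyOp hy (v t)))
    (hid6 : ∀ t, ipew Nx Ny hx hy (AxOp (φ t) * DxOp hx (μ t)) (u t)
        + ipns Nx Ny hx hy (AyOp (φ t) * DyOp hy (μ t)) (v t)
      = -ip2 Nx Ny hx hy (μ t)
          (dxOp hx (AxOp (φ t) * u t) + dyOp hy (AyOp (φ t) * v t))) :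
    -- the discrete energy dissipation law
    ∀ t, HasDerivAt
      (fun s =>
        (1 / 2) * (ipew Nx Ny hx hy (u s) (u s) + ipns Nx Ny hx hy (v s) (v s))
          + (γ * ε / 2) * (ipew Nx Ny hx hy (DxOp hx (φ s)) (DxOp hx (φ s))
              + ipns Nx Ny hx hy (DyOp hy (φ s)) (DyOp hy (φ s)))
          + (γ / ε) * ip2 Nx Ny hx hy (fun i j => fW (φ s i j)) 1)
      (-(ip2 Nx Ny hx hy (fun _ _ => η)
            (dxOp hx (u t) * dxOp hx (u t) + dyOp hy (v t) * dyOp hy (v t))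
          + ipew Nx Ny hx hy (fun i j => M (AxOp (φ t) i j))
              (DxOp hx (μ t) * DxOp hx (μ t))
          + ipns Nx Ny hx hy (fun i j => M (AyOp (φ t) i j))
              (DyOp hy (μ t) * DyOp hy (μ t)))) t := by
  intro t
  have hu := ipew_eq_of_momentum (F := AxOp (φ t) * DxOp hx (μ t)) (hu0 t) (huN t) (hmom1 t)
    (hid1 t) (hid2 t)
  have hv := ipns_eq_of_momentum (F := AyOp (φ t) * DyOp hy (μ t)) (hv0 t) (hvN t) (hmom2 t)
    (hid3 t) (hid4 t)
  have hpres : ip2 Nx Ny hx hy (p t) (dxOp hx (u t) + dyOp hy (v t)) = 0 :=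
    ip2_eq_zero_of_right (hincomp t)
  have hch := ip2_add_ip2_eq_of_cahnHilliard (hμW t) (hμE t) (hμS t) (hμN t) (hCH t)
  have hchem := ip2_eq_of_chemicalPotential (φt t) (hφW t) (hφE t) (hφS t) (hφN t) (hμdef t)
  refine (hasDerivAt_discreteEnergy hf (hut t) (hvt t) (hφt t)).congr_deriv ?_
  rw [ip2_const_left_mul_add_mul]
  linear_combination hu + hv - hid5 t + hpres - hid6 t + hch - hchem

/-- Discrete energy law for the semi-discrete staggered-grid CHNS scheme: solutions of the
semi-discrete scheme — the momentum equations with skew-symmetric discrete convection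
(`hmom1`, `hmom2`), discrete incompressibility `d_x u + d_y v = 0` (`hincomp`), the
Cahn–Hilliard equation with discrete transport (`hCH`), and
`μ = −γεΔ_hφ + (γ/ε)f′(φ)` (`hμ`) — satisfy
`(d/dt)E_h + (η, (d_x u)² + (d_y v)²)₂ + [M(A_xφ), (D_xμ)²]_{ew}
  + [M(A_yφ), (D_yμ)²]_{ns} = 0`,
where `E_h = (1/2)‖u‖₂² + (γε/2)‖∇_hφ‖₂² + (γ/ε)(f(φ), 1)₂`, assuming the semi-discrete
inner-product identities `hid1`–`hid6`: the skew-symmetry identities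
`[u·D_x(a_x u) + A_x(d_x(u u)), u]_{ew} = 0` and its y-direction and cross analogues,
the pressure identity
`[D_x p, u]_{ew} + [D_y p, v]_{ns} = −(p, d_x u + d_y v)₂`, and the surface-force identity
`[A_xφ D_xμ, u]_{ew} + [A_yφ D_yμ, v]_{ns} = −(μ, d_x(A_xφ u) + d_y(A_yφ v))₂`.
The boundary conditions of the scheme (no-slip for `u, v`, discrete Neumann ghost
conditions for `φ, μ`) are included as hypotheses. -/
theorem stmt16 (Nx Ny : ℕ) (hx hy : ℝ) (hhx : 0 < hx) (hhy : 0 < hy)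
    (γ ε η : ℝ) (hγ : 0 < γ) (hε : 0 < ε) (hη : 0 < η)
    (u ut v vt φ φt μ p : ℝ → ℤ → ℤ → ℝ)
    (M : ℝ → ℝ) (hMpos : ∀ s, 0 ≤ M s)
    (fW fd : ℝ → ℝ) (hf : ∀ x, HasDerivAt fW (fd x) x)
    -- no-slip boundary conditions for the velocity
    (hu0 : ∀ t j, u t 0 j = 0) (huN : ∀ t j, u t (Nx : ℤ) j = 0)
    (hv0 : ∀ t i, v t i 0 = 0) (hvN : ∀ t i, v t i (Ny : ℤ) = 0)
    (huS : ∀ t i, AyOp (u t) i 0 = 0) (huT : ∀ t i, AyOp (u t) i (Ny : ℤ) = 0)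
    (hvW : ∀ t j, AxOp (v t) 0 j = 0) (hvE : ∀ t j, AxOp (v t) (Nx : ℤ) j = 0)
    -- discrete Neumann (ghost-cell) boundary conditions for φ and μ
    (hφW : ∀ t j, φ t 0 j = φ t 1 j) (hφE : ∀ t j, φ t ((Nx : ℤ) + 1) j = φ t (Nx : ℤ) j)
    (hφS : ∀ t i, φ t i 0 = φ t i 1) (hφN : ∀ t i, φ t i ((Ny : ℤ) + 1) = φ t i (Ny : ℤ))
    (hμW : ∀ t j, μ t 0 j = μ t 1 j) (hμE : ∀ t j, μ t ((Nx : ℤ) + 1) j = μ t (Nx : ℤ) j)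
    (hμS : ∀ t i, μ t i 0 = μ t i 1) (hμN : ∀ t i, μ t i ((Ny : ℤ) + 1) = μ t i (Ny : ℤ))
    -- time derivatives
    (hut : ∀ t i j, HasDerivAt (fun s => u s i j) (ut t i j) t)
    (hvt : ∀ t i j, HasDerivAt (fun s => v s i j) (vt t i j) t)
    (hφt : ∀ t i j, HasDerivAt (fun s => φ s i j) (φt t i j) t)
    -- the semi-discrete momentum equations with skew-symmetric discrete convection
    (hmom1 : ∀ t, ∀ i ∈ Icc (1 : ℤ) ((Nx : ℤ) - 1), ∀ j ∈ Icc (1 : ℤ) (Ny : ℤ),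
      ut t i j
          + (1 / 2) * ((u t * DxOp hx (axOp (u t)) + AxOp (dxOp hx (u t * u t))
              + ayOp (AxOp (v t) * DyOp hy (u t)) + dyOp hy (AyOp (u t) * AxOp (v t))) i j)
        = -DxOp hx (p t) i j + η * DxOp hx (dxOp hx (u t)) i j
            - AxOp (φ t) i j * DxOp hx (μ t) i j)
    (hmom2 : ∀ t, ∀ i ∈ Icc (1 : ℤ) (Nx : ℤ), ∀ j ∈ Icc (1 : ℤ) ((Ny : ℤ) - 1),
      vt t i j
          + (1 / 2) * ((axOp (AyOp (u t) * DxOp hx (v t)) + dxOp hx (AyOp (u t) * AxOp (v t))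
              + v t * DyOp hy (ayOp (v t)) + AyOp (dyOp hy (v t * v t))) i j)
        = -DyOp hy (p t) i j + η * DyOp hy (dyOp hy (v t)) i j
            - AyOp (φ t) i j * DyOp hy (μ t) i j)
    -- discrete incompressibility
    (hincomp : ∀ t, ∀ i ∈ Icc (1 : ℤ) (Nx : ℤ), ∀ j ∈ Icc (1 : ℤ) (Ny : ℤ),
      dxOp hx (u t) i j + dyOp hy (v t) i j = 0)
    -- the semi-discrete Cahn–Hilliard equation with discrete transport
    (hCH : ∀ t, ∀ i ∈ Icc (1 : ℤ) (Nx : ℤ), ∀ j ∈ Icc (1 : ℤ) (Ny : ℤ),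
      φt t i j + dxOp hx (AxOp (φ t) * u t) i j + dyOp hy (AyOp (φ t) * v t) i j
        = dxOp hx ((fun a b => M (AxOp (φ t) a b)) * DxOp hx (μ t)) i j
          + dyOp hy ((fun a b => M (AyOp (φ t) a b)) * DyOp hy (μ t)) i j)
    -- the discrete chemical potential μ = −γεΔ_hφ + (γ/ε)f′(φ)
    (hμdef : ∀ t, ∀ i ∈ Icc (1 : ℤ) (Nx : ℤ), ∀ j ∈ Icc (1 : ℤ) (Ny : ℤ),
      μ t i j
        = -(γ * ε) * (dxOp hx (DxOp hx (φ t)) i j + dyOp hy (DyOp hy (φ t)) i j)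
          + (γ / ε) * fd (φ t i j))
    -- assumed semi-discrete inner-product identities
    (hid1 : ∀ t, ipew Nx Ny hx hy
      (u t * DxOp hx (axOp (u t)) + AxOp (dxOp hx (u t * u t))) (u t) = 0)
    (hid2 : ∀ t, ipew Nx Ny hx hy
      (ayOp (AxOp (v t) * DyOp hy (u t)) + dyOp hy (AyOp (u t) * AxOp (v t))) (u t) = 0)
    (hid3 : ∀ t, ipns Nx Ny hx hy
      (axOp (AyOp (u t) * DxOp hx (v t)) + dxOp hx (AyOp (u t) * AxOp (v t))) (v t) = 0)
    (hid4 : ∀ t, ipns Nx Ny hx hy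
      (v t * DyOp hy (ayOp (v t)) + AyOp (dyOp hy (v t * v t))) (v t) = 0)
    (hid5 : ∀ t, ipew Nx Ny hx hy (DxOp hx (p t)) (u t)
        + ipns Nx Ny hx hy (DyOp hy (p t)) (v t)
      = -ip2 Nx Ny hx hy (p t) (dxOp hx (u t) + dyOp hy (v t)))
    (hid6 : ∀ t, ipew Nx Ny hx hy (AxOp (φ t) * DxOp hx (μ t)) (u t)
        + ipns Nx Ny hx hy (AyOp (φ t) * DyOp hy (μ t)) (v t)
      = -ip2 Nx Ny hx hy (μ t)
          (dxOp hx (AxOp (φ t) * u t) + dyOp hy (AyOp (φ t) * v t))) :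
    -- the discrete energy dissipation law
    ∀ t, HasDerivAt
      (fun s =>
        (1 / 2) * (ipew Nx Ny hx hy (u s) (u s) + ipns Nx Ny hx hy (v s) (v s))
          + (γ * ε / 2) * (ipew Nx Ny hx hy (DxOp hx (φ s)) (DxOp hx (φ s))
              + ipns Nx Ny hx hy (DyOp hy (φ s)) (DyOp hy (φ s)))
          + (γ / ε) * ip2 Nx Ny hx hy (fun i j => fW (φ s i j)) 1)
      (-(ip2 Nx Ny hx hy (fun _ _ => η)
            (dxOp hx (u t) * dxOp hx (u t) + dyOp hy (v t) * dyOp hy (v t))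
          + ipew Nx Ny hx hy (fun i j => M (AxOp (φ t) i j))
              (DxOp hx (μ t) * DxOp hx (μ t))
          + ipns Nx Ny hx hy (fun i j => M (AyOp (φ t) i j))
              (DyOp hy (μ t) * DyOp hy (μ t)))) t :=
  stmt16_general Nx Ny hx hy γ ε η u ut v vt φ φt μ p M fW fd hf hu0 huN hv0 hvN hφW hφE hφS hφN hμW
    hμE hμS hμN hut hvt hφt hmom1 hmom2 hincomp hCH hμdef hid1 hid2 hid3 hid4 hid5 hid6
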